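/- Let q > 5/3 and let δ ∈ [0,1) satisfy δ ≤ 3 − 5/q. Then there exist real numbers p, σ, α, θ with 1 < p < 3, 1 ≤ σ ≤ q, 0 < α < 1 and 0 ≤ θ ≤ 1, such that 1/σ + 1/p + (2+δ)/3 = 2, α = (3/2)(1 − 1/p), 1/σ = θ + (1−θ)/q, and 1 − θ ≤ q(1 − α). -/

import Mathlib

/-!
Put `x = 1/p` and `s = 1/σ`. Then `α = 3/2 (1 - x)`, the first identity forces `s = (4 - δ)/3 - x`,
and `θ` is the barycentric coordinate of `s` on the segment `[1/q, 1]`. With these choices every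
requirement is a linear condition on `x`: `1/3 < x < 1`, `x ≤ (4 - δ)/3 - 1/q` (so that `σ ≤ q`) and
`x ≥ (3q - 5 + 2δ)/(9q - 15)` (the last inequality). The hypothesis `δ ≤ 3 - 5/q` is exactly what
makes the two non-strict bounds compatible.
-/

theorem Set.nonempty_Icc_inter_Ioo {α : Type*} [LinearOrder α] [DenselyOrdered α] {a b c d : α}
    (hab : a ≤ b) (had : a < d) (hcb : c < b) (hcd : c < d) :
    (Set.Icc a b ∩ Set.Ioo c d).Nonempty := by
  obtain ⟨y, hcy, hy⟩ := exists_between (lt_min hcb hcd)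
  exact ⟨max a y, ⟨le_max_left a y, max_le hab (min_le_left b d |>.trans' hy.le)⟩,
    lt_max_of_lt_right hcy, max_lt had (hy.trans_le (min_le_right b d))⟩

theorem exists_interpolation_param {q s : ℝ} (hq : 1 < q) (hs₀ : 1 / q ≤ s) (hs₁ : s ≤ 1) :
    ∃ θ : ℝ, 0 ≤ θ ∧ θ ≤ 1 ∧ s = θ + (1 - θ) / q ∧ (q - 1) * (1 - θ) = q * (1 - s) := by
  have hq₀ : q ≠ 0 := by positivity
  have hq₁ : q - 1 ≠ 0 := sub_ne_zero.mpr hq.ne'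
  have hqs : 1 ≤ q * s := by rwa [div_le_iff₀' (by positivity)] at hs₀
  refine ⟨(q * s - 1) / (q - 1), by bound, ?_, ?_, ?_⟩
  · rw [div_le_one (by linarith)]
    nlinarith
  · field_simp
    ring
  · field_simp
    ring

theorem exists_reciprocal_exponent {q δ : ℝ} (hq : 5 / 3 < q) (hδ₀ : 0 ≤ δ)
    (hδq : δ ≤ 3 - 5 / q) :
    ∃ x : ℝ, 1 / 3 < x ∧ x < 1 ∧ x ≤ (4 - δ) / 3 - 1 / q ∧
      2 * (x - (1 - δ) / 3) ≤ (q - 1) * (3 * x - 1) := by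
  have hq₀ : 0 < q := by linarith
  have h₅ : 0 < 9 * q - 15 := by linarith
  have hδq' : δ * q ≤ 3 * q - 5 := by
    have := mul_le_mul_of_nonneg_right hδq hq₀.le
    rwa [sub_mul, div_mul_cancel₀ _ hq₀.ne'] at this
  have hlow_up : (3 * q - 5 + 2 * δ) / (9 * q - 15) ≤ (4 - δ) / 3 - 1 / q := by
    have h : ((4 - δ) / 3 - 1 / q) * (9 * q - 15) = (3 * q - 5) * ((4 - δ) * q - 3) / q := by
      field_simp
      ring
    rw [div_le_iff₀ h₅, h, le_div_iff₀ hq₀]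
    nlinarith [mul_nonneg (by linarith : (0 : ℝ) ≤ q - 1) (sub_nonneg.mpr hδq')]
  have hlow_one : (3 * q - 5 + 2 * δ) / (9 * q - 15) < 1 := by
    rw [div_lt_one h₅]
    nlinarith
  have hthird_up : 1 / 3 < (4 - δ) / 3 - 1 / q := by
    have h₁ : 0 < 1 / q := by positivity
    have h₂ : 5 / q = 5 * (1 / q) := by ring
    linarith
  obtain ⟨x, ⟨hx_low, hx_up⟩, hx_third, hx_one⟩ :=
    Set.nonempty_Icc_inter_Ioo hlow_up hlow_one hthird_up (by norm_num : (1 : ℝ) / 3 < 1)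
  refine ⟨x, hx_third, hx_one, hx_up, ?_⟩
  rw [div_le_iff₀ h₅] at hx_low
  linarith

theorem stmt15 (q δ : ℝ) (hq : 5 / 3 < q) (hδ : δ ∈ Set.Ico (0 : ℝ) 1)
    (hδq : δ ≤ 3 - 5 / q) :
    ∃ p σ α θ : ℝ, 1 < p ∧ p < 3 ∧ 1 ≤ σ ∧ σ ≤ q ∧ 0 < α ∧ α < 1 ∧
      0 ≤ θ ∧ θ ≤ 1 ∧ 1 / σ + 1 / p + (2 + δ) / 3 = 2 ∧
      α = 3 / 2 * (1 - 1 / p) ∧ 1 / σ = θ + (1 - θ) / q ∧ 1 - θ ≤ q * (1 - α) := by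
  have hδ₀ : 0 ≤ δ := hδ.1
  have hq₁ : 1 < q := by linarith
  obtain ⟨x, hx_third, hx_one, hx_up, hx_low⟩ := exists_reciprocal_exponent hq hδ₀ hδq
  set s := (4 - δ) / 3 - x with hs_def
  have hs₀ : 1 / q ≤ s := by linarith
  obtain ⟨θ, hθ₀, hθ₁, hsθ, hθs⟩ := exists_interpolation_param hq₁ hs₀ (by linarith)
  have hx₀ : 0 < x := by linarith
  have hs_pos : 0 < s := (one_div_pos.mpr (by linarith)).trans_le hs₀
  refine ⟨1 / x, 1 / s, 3 / 2 * (1 - x), θ, ?_, ?_, ?_, ?_, by linarith, by linarith, hθ₀, hθ₁,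
    ?_, by rw [one_div_one_div], by rw [one_div_one_div, hsθ], ?_⟩
  · rw [lt_div_iff₀ hx₀]; linarith
  · rw [div_lt_iff₀ hx₀]; linarith
  · rw [le_div_iff₀ hs_pos]; linarith
  · rw [div_le_iff₀ hs_pos]
    rwa [div_le_iff₀' (by linarith)] at hs₀
  · rw [one_div_one_div, one_div_one_div]; ring
  · refine le_of_mul_le_mul_left ?_ (sub_pos.mpr hq₁)
    rw [hθs]
    nlinarith [mul_le_mul_of_nonneg_left hx_low (by linarith : (0 : ℝ) ≤ q)]
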